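/- arXiv:0903.4336 — 4 statements merged into one kernel-verified Lean document; each statement's English description precedes it below -/
import Mathlib

section
/- Let N be a finite group, L a normal subgroup of N, and χ an irreducible (complex) character of L. If the quotient I_N(χ)/L of the inertia group of χ in N by L is cyclic, then χ extends to an irreducible character of I_N(χ). -/
open CategoryTheory

noncomputable section

/-- `χ` is the character of some irreducible (simple) finite-dimensional complex
representation of `G`. -/
def IsIrrChar {G : Type} [Group G] (χ : G → ℂ) : Prop :=
  ∃ V : FDRep ℂ G, Simple V ∧ V.character = χ

open Classical in
/-- Extension of a function defined on a subgroup to the whole group by a default value. -/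
noncomputable def extFun {N : Type*} [Group N] {M : Type*} (T : Subgroup N)
    (χ : ↥T → M) (d : M) : N → M :=
  fun x => if h : x ∈ T then χ ⟨x, h⟩ else d

/-- The inertia group `I_N(χ) = {n : N | χ^n = χ}` of a character `χ` of a normal
subgroup `T` of `N`, where `χ^n (t) = χ (n * t * n⁻¹)`. -/
def inertia {N : Type*} [Group N] {M : Type*} (T : Subgroup N) (hT : T.Normal)
    (χ : ↥T → M) (d : M) : Subgroup N where
  carrier := {n | ∀ t ∈ T, extFun T χ d (n * t * n⁻¹) = extFun T χ d t}
  one_mem' := by intro t ht; simp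
  mul_mem' := by
    intro a b ha hb t ht
    have h1 : a * b * t * (a * b)⁻¹ = a * (b * t * b⁻¹) * a⁻¹ := by group
    rw [h1, ha _ (hT.conj_mem t ht b), hb t ht]
  inv_mem' := by
    intro a ha t ht
    rw [inv_inv]
    have h2 : a * (a⁻¹ * t * a) * a⁻¹ = t := by group
    have h3 := ha _ (by simpa using hT.conj_mem t ht a⁻¹)
    rw [h2] at h3
    exact h3.symm

/-- The usual inner product of class functions on a finite group. -/
noncomputable def charInner (G : Type*) [Group G] (φ ψ : G → ℂ) : ℂ :=
  (Nat.card G : ℂ)⁻¹ * ∑ᶠ g, φ g * (starRingEnd ℂ) (ψ g)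

/-- The conjugate character `χ^n` on a normal subgroup: `χ^n (x) = χ (n * x * n⁻¹)`. -/
def conjChar {N : Type*} [Group N] {M : Type*} (L : Subgroup N) (hL : L.Normal)
    (n : N) (χ : ↥L → M) : ↥L → M :=
  fun x => χ ⟨n * x * n⁻¹, hL.conj_mem x x.2 n⟩

/-!
Let `ρ : L → GL(V)` afford `χ`, let `T = I_N(χ)` and let `g ∈ T` generate `T/L`, of order `m`.
Since `χ` is `g`-invariant, the conjugate representation `x ↦ ρ(g x g⁻¹)` has the same character
as `ρ`, so it is isomorphic to `ρ`: some `u ∈ GL(V)` satisfies `u ρ(x) u⁻¹ = ρ(g x g⁻¹)`. Then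
`u ^ m` and `ρ(g ^ m)` induce the same conjugation on `ρ(L)`, so by Schur's lemma they differ by
a scalar, and after rescaling `u` by an `m`-th root of it, `u ^ m = ρ(g ^ m)`. Now
`x g ^ k ↦ ρ(x) u ^ k` is a well-defined representation of `T`; it restricts to `ρ` on `L`,
hence is irreducible.
-/

theorem mem_inertia_iff {N M : Type*} [Group N] {T : Subgroup N} {hT : T.Normal} {χ : T → M}
    {d : M} {n : N} : n ∈ inertia T hT χ d ↔ conjChar T hT n χ = χ := by
  constructor
  · intro h
    funext x
    simpa [extFun, conjChar, hT.conj_mem x x.2 n] using h x x.2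
  · intro h t ht
    simp only [extFun, dif_pos ht, dif_pos (hT.conj_mem t ht n)]
    exact congrFun h ⟨t, ht⟩

theorem le_inertia {N M : Type*} [Group N] {T : Subgroup N} {hT : T.Normal} {χ : T → M} {d : M}
    (hχ : ∀ x y : T, χ (y * x * y⁻¹) = χ x) : T ≤ inertia T hT χ d :=
  fun n hn => mem_inertia_iff.2 <| funext fun x => hχ x ⟨n, hn⟩

section Extension

variable {G Γ : Type*} [Group G] [Group Γ] {L : Subgroup G}

theorem zpow_eq_map_of_pow_eq (φ : L →* Γ) {g : G} {w : Γ} {m : ℕ} (hm : g ^ m ∈ L)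
    (hw : w ^ m = φ ⟨g ^ m, hm⟩) {k : ℤ} (hk : g ^ k ∈ L) (hmk : (m : ℤ) ∣ k) :
    w ^ k = φ ⟨g ^ k, hk⟩ := by
  obtain ⟨j, rfl⟩ := hmk
  rw [zpow_mul, zpow_natCast, hw, ← map_zpow]
  congr 1
  ext
  simp [zpow_mul]

variable [L.Normal]

theorem zpow_mem_iff_orderOf_dvd (g : G) (k : ℤ) :
    g ^ k ∈ L ↔ (orderOf (g : G ⧸ L) : ℤ) ∣ k := by
  rw [orderOf_dvd_iff_zpow_eq_one, ← QuotientGroup.mk_zpow, QuotientGroup.eq_one_iff]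

theorem map_conjNormal_zpow (φ : L →* Γ) {g : G} {w : Γ}
    (h : ∀ x, φ (MulAut.conjNormal g x) = MulAut.conj w (φ x)) (k : ℤ) (x : L) :
    φ (MulAut.conjNormal (g ^ k) x) = MulAut.conj (w ^ k) (φ x) := by
  have h_inv : ∀ x, φ (MulAut.conjNormal g⁻¹ x) = MulAut.conj w⁻¹ (φ x) := fun x => by
    have := h (MulAut.conjNormal g⁻¹ x)
    rw [← MulAut.mul_apply, ← map_mul, mul_inv_cancel, map_one, MulAut.one_apply] at this
    rw [this, ← MulAut.mul_apply, ← map_mul, inv_mul_cancel, map_one, MulAut.one_apply]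
  induction k using Int.induction_on generalizing x with
  | zero => simp
  | succ k ih => rw [zpow_add_one, zpow_add_one, map_mul, map_mul, MulAut.mul_apply,
      MulAut.mul_apply, ih, h]
  | pred k ih => rw [zpow_sub_one, zpow_sub_one, map_mul, map_mul, MulAut.mul_apply,
      MulAut.mul_apply, ih, h_inv]

/-- `G` is a quotient of `L ⋊ ℤ`, with `ℤ` acting by conjugation by `g`, and `hpow` says that
`φ ⋊ (k ↦ w ^ k)` kills the kernel of this quotient map. -/
theorem MonoidHom.exists_comp_subtype_eq_of_forall_mem_zpowers (φ : L →* Γ) {g : G}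
    (hg : ∀ q : G ⧸ L, q ∈ Subgroup.zpowers (g : G ⧸ L)) {w : Γ}
    (hconj : ∀ x, φ (MulAut.conjNormal g x) = MulAut.conj w (φ x))
    (hpow : ∀ (k : ℤ) (hk : g ^ k ∈ L), w ^ k = φ ⟨g ^ k, hk⟩) :
    ∃ ψ : G →* Γ, ψ.comp L.subtype = φ := by
  let act : Multiplicative ℤ →* MulAut L := MulAut.conjNormal.comp (zpowersHom G g)
  let π : L ⋊[act] Multiplicative ℤ →* G := SemidirectProduct.lift L.subtype (zpowersHom G g)
    fun k => by ext x; exact MulAut.conjNormal_apply (g ^ k.toAdd) x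
  let Φ : L ⋊[act] Multiplicative ℤ →* Γ := SemidirectProduct.lift φ (zpowersHom Γ w)
    fun k => by ext x; simpa [act] using map_conjNormal_zpow φ hconj k.toAdd x
  have hπ : Function.Surjective π := by
    intro t
    obtain ⟨k, hk⟩ := hg t
    have hl : t * (g ^ k)⁻¹ ∈ L :=
      ‹L.Normal›.mem_comm (QuotientGroup.eq.1 (by simpa using hk))
    exact ⟨⟨⟨_, hl⟩, .ofAdd k⟩, by simp [π]⟩
  have hker : π.ker ≤ Φ.ker := by
    rintro ⟨l, k⟩ h
    have hlk : (l : G) * g ^ k.toAdd = 1 := by simpa [π] using h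
    have hk : g ^ k.toAdd ∈ L := by
      rw [eq_inv_of_mul_eq_one_right hlk]; exact inv_mem l.2
    have : l * ⟨_, hk⟩ = 1 := Subtype.ext hlk
    show φ l * w ^ k.toAdd = 1
    rw [hpow _ hk, ← map_mul, this, map_one]
  refine ⟨π.liftOfSurjective hπ ⟨Φ, hker⟩, MonoidHom.ext fun x => ?_⟩
  have hx : (x : G) = π (SemidirectProduct.inl x) := by simp [π]
  rw [MonoidHom.comp_apply, Subgroup.coe_subtype, hx, MonoidHom.liftOfRightInverse_comp_apply]
  simp [Φ]

end Extension

namespace FDRep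

instance {G H : Type} [Group G] [Group H] (f : G →* H) :
    (Action.res (FGModuleCat ℂ) f).PreservesMonomorphisms :=
  ⟨fun g _ => (Action.forget _ G).mono_of_mono_map
    (inferInstanceAs (Mono ((Action.forget (FGModuleCat ℂ) H).map g)))⟩

instance {G H : Type} [Group G] [Group H] (f : G →* H) :
    (Action.res (FGModuleCat ℂ) f).ReflectsIsomorphisms :=
  ⟨fun g _ =>
    have : IsIso g.hom := inferInstanceAs (IsIso ((Action.forget _ G).map ((Action.res _ f).map g)))
    Action.isIso_of_hom_isIso g⟩

theorem simple_of_simple_comp {G H W : Type} [Group G] [Group H] [AddCommGroup W] [Module ℂ W]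
    [FiniteDimensional ℂ W] (f : G →* H) (ρ : Representation ℂ H W)
    (h : Simple (FDRep.of (ρ.comp f))) : Simple (FDRep.of ρ) :=
  have : Simple ((Action.res (FGModuleCat ℂ) f).obj (FDRep.of ρ)) := h
  (Action.res (FGModuleCat ℂ) f).simple_of_simple_obj (FDRep.of ρ)

theorem simple_comp_mulEquiv {G H : Type} [Group G] [Group H] (V : FDRep ℂ H) [Simple V]
    (e : G ≃* H) : Simple (FDRep.of (V.ρ.comp e.toMonoidHom)) := by
  apply simple_of_simple_comp e.symm.toMonoidHom
  have : (V.ρ.comp e.toMonoidHom).comp e.symm.toMonoidHom = V.ρ := by ext x : 1; simp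
  rwa [this]

theorem nonempty_iso_of_character_eq {G : Type} [Group G] [Finite G] {V W : FDRep ℂ G}
    [Simple V] [Simple W] (h : V.character = W.character) : Nonempty (V ≅ W) := by
  have := Fintype.ofFinite G
  have h1 := FDRep.char_orthonormal V W
  rw [← h, FDRep.char_orthonormal V V, if_pos ⟨Iso.refl V⟩] at h1
  split_ifs at h1 with hVW
  · exact hVW
  · norm_num at h1

variable {H : Type} [Group H] (V : FDRep ℂ H)

instance nontrivial_end_of_simple [Simple V] : Nontrivial (Module.End ℂ V) :=
  nontrivial_of_ne 1 0 fun h => id_nonzero V (by ext v; exact congr($h v))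

theorem exists_eq_algebraMap_of_commute [Simple V] (f : Module.End ℂ V)
    (hf : ∀ x, Commute f (V.ρ x)) : ∃ c : ℂ, f = algebraMap ℂ _ c := by
  let F : V ⟶ V := Action.Hom.mk (FGModuleCat.ofHom f) fun x => by
    ext v; exact congr($((hf x).eq) v)
  obtain ⟨c, hc⟩ := endomorphism_simple_eq_smul_id ℂ F
  exact ⟨c, by ext v; exact congr($(hc.symm).hom v)⟩

theorem exists_conj_eq_of_character_eq [Finite H] [Simple V] (σ : H ≃* H)
    (h : ∀ x, V.character (σ x) = V.character x) :
    ∃ u : (V →ₗ[ℂ] V)ˣ, ∀ x, Representation.asGroupHom V.ρ (σ x) =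
      MulAut.conj u (Representation.asGroupHom V.ρ x) := by
  let Vσ := FDRep.of (V.ρ.comp σ.toMonoidHom)
  have : Simple Vσ := simple_comp_mulEquiv V σ
  obtain ⟨i⟩ := nonempty_iso_of_character_eq (W := Vσ) (funext fun x => (h x).symm)
  refine ⟨LinearMap.GeneralLinearGroup.ofLinearEquiv (isoToLinearEquiv (W := Vσ) i),
    fun x => Units.ext ?_⟩
  ext v
  simpa [Vσ, Representation.asGroupHom_apply, ← LinearMap.GeneralLinearGroup.ofLinearEquiv_inv]
    using congr($(FDRep.Iso.conj_ρ i x) v)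

theorem exists_conj_eq_pow_eq [Simple V] {u b : (V →ₗ[ℂ] V)ˣ} {m : ℕ} (hm : m ≠ 0)
    (h : ∀ x, MulAut.conj (u ^ m) (Representation.asGroupHom V.ρ x) =
      MulAut.conj b (Representation.asGroupHom V.ρ x)) :
    ∃ w : (V →ₗ[ℂ] V)ˣ, MulAut.conj w = MulAut.conj u ∧ w ^ m = b := by
  have hcomm : ∀ x, Commute (b⁻¹ * u ^ m) (Representation.asGroupHom V.ρ x) := fun x => by
    set y := Representation.asGroupHom V.ρ x
    have hx : u ^ m * y * (u ^ m)⁻¹ = b * y * b⁻¹ := h x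
    calc b⁻¹ * u ^ m * y = b⁻¹ * (u ^ m * y * (u ^ m)⁻¹) * u ^ m := by group
      _ = y * (b⁻¹ * u ^ m) := by rw [hx]; group
  obtain ⟨c, hc⟩ := exists_eq_algebraMap_of_commute V _ fun x => (hcomm x).units_val
  have hc0 : c ≠ 0 := by rintro rfl; exact Units.ne_zero _ (hc.trans (map_zero _))
  obtain ⟨ω, hω⟩ := IsAlgClosed.exists_pow_nat_eq c⁻¹ (Nat.pos_of_ne_zero hm)
  have hω0 : ω ≠ 0 := by rintro rfl; exact inv_ne_zero hc0 (by simpa [hm] using hω.symm)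
  let z : (V →ₗ[ℂ] V)ˣ := Units.map (algebraMap ℂ (Module.End ℂ V)) (Units.mk0 ω hω0)
  have hz : ∀ y, Commute z y := fun y =>
    .units_of_val (Algebra.commutes ω (y : Module.End ℂ V))
  refine ⟨z * u, ?_, ?_⟩
  · rw [map_mul, show MulAut.conj z = 1 from MulEquiv.ext fun y => by simp [(hz y).eq], one_mul]
  · rw [(hz u).mul_pow, show u ^ m = b * (b⁻¹ * u ^ m) by group, ← mul_assoc,
      ((hz b).pow_left m).eq, mul_assoc]
    convert mul_one b
    ext : 1
    simp only [z, Units.val_mul, Units.val_pow_eq_pow_val, Units.coe_map, Units.val_mk0,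
      MonoidHom.coe_coe, ← map_pow, hω, hc, Units.val_one]
    rw [← map_mul, inv_mul_cancel₀ hc0, map_one]

theorem exists_comp_subtype_eq_of_isCyclic {G : Type} [Group G] {L : Subgroup G} [L.Normal]
    [Finite L] [IsCyclic (G ⧸ L)] (V : FDRep ℂ L) [Simple V]
    (hV : ∀ (g : G) (x : L), V.character (MulAut.conjNormal g x) = V.character x) :
    ∃ ρ : Representation ℂ G V, ρ.comp L.subtype = V.ρ := by
  obtain ⟨q, hq⟩ := IsCyclic.exists_generator (α := G ⧸ L)
  obtain ⟨g, rfl⟩ := QuotientGroup.mk_surjective q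
  set ρu := Representation.asGroupHom V.ρ
  obtain ⟨u, hu⟩ := V.exists_conj_eq_of_character_eq (MulAut.conjNormal g) (hV g)
  set m := orderOf (g : G ⧸ L)
  have hgm : g ^ m ∈ L := by exact_mod_cast (zpow_mem_iff_orderOf_dvd g m).2 dvd_rfl
  obtain ⟨w, hw_conj, hw_pow⟩ :
      ∃ w, MulAut.conj w = MulAut.conj u ∧ w ^ m = ρu ⟨g ^ m, hgm⟩ := by
    rcases eq_or_ne m 0 with hm | hm
    · have : (⟨g ^ m, hgm⟩ : L) = 1 := Subtype.ext (by simp [hm])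
      exact ⟨u, rfl, by rw [this, map_one, hm, pow_zero]⟩
    · refine V.exists_conj_eq_pow_eq hm fun x => ?_
      rw [← zpow_natCast, ← map_conjNormal_zpow ρu hu, zpow_natCast, MulAut.conj_apply,
        ← map_inv, ← map_mul, ← map_mul]
      congr 1
  obtain ⟨ψ, hψ⟩ := MonoidHom.exists_comp_subtype_eq_of_forall_mem_zpowers ρu hq (w := w)
    (fun x => by rw [hu, hw_conj])
    (fun k hk => zpow_eq_map_of_pow_eq ρu hgm hw_pow hk ((zpow_mem_iff_orderOf_dvd g k).1 hk))
  refine ⟨(Units.coeHom _).comp ψ, ?_⟩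
  rw [MonoidHom.comp_assoc, hψ]
  ext x : 1
  simp [ρu, Representation.asGroupHom_apply]

end FDRep

/-- If `L ◁ N` are finite groups, `χ ∈ Irr(L)`, and `I_N(χ)/L` is cyclic,
then `χ` extends to an irreducible character of `I_N(χ)`. -/
theorem stmt0 {N : Type} [Group N] [Finite N] (L : Subgroup N) [hL : L.Normal]
    (χ : ↥L → ℂ) (hχ : IsIrrChar χ)
    (hcyc : IsCyclic (↥(inertia L hL χ 0) ⧸ L.subgroupOf (inertia L hL χ 0))) :
    ∃ χ' : ↥(inertia L hL χ 0) → ℂ, IsIrrChar χ' ∧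
      ∀ (x : N) (hx : x ∈ L) (hx' : x ∈ inertia L hL χ 0),
        χ' ⟨x, hx'⟩ = χ ⟨x, hx⟩ := by
  obtain ⟨V, hV, rfl⟩ := hχ
  set T := inertia L hL V.character 0
  have hLT : L ≤ T := le_inertia (FDRep.char_conj V)
  let e := L.subgroupOfEquivOfLe hLT
  let V' : FDRep ℂ (L.subgroupOf T) := FDRep.of (V.ρ.comp e.toMonoidHom)
  have : Simple V' := FDRep.simple_comp_mulEquiv V e
  obtain ⟨ρ, hρ⟩ := V'.exists_comp_subtype_eq_of_isCyclic fun t x =>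
    congrFun (mem_inertia_iff.1 t.2) (e x)
  refine ⟨(FDRep.of ρ).character, ⟨FDRep.of ρ, ?_, rfl⟩, fun x hx hx' => ?_⟩
  · exact FDRep.simple_of_simple_comp _ ρ (by rwa [hρ])
  · exact congrArg (LinearMap.trace ℂ V) (congr($hρ ⟨⟨x, hx'⟩, hx⟩))
end
end

section
/- Let N be a finite group and L a normal abelian subgroup of N such that N/L is cyclic. Then there exists an N-equivariant extension map for L ◁ N, i.e., a map Λ assigning to each λ ∈ Irr(L) an extension Λ(λ) ∈ Irr(I_N(λ)) of λ, such that Λ(λ^n) = Λ(λ)^n for all n ∈ N and λ ∈ Irr(L). -/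
/-!
Irreducible characters of the abelian group `L` are linear. A linear character `λ` is
invariant under its inertia group `I`, so `λ` is trivial on `[I, L]`; hence `L / ker λ` is
central in `I / ker λ`, and since the quotient by it embeds in the cyclic group `N / L`, the
group `I / ker λ` is abelian, so `λ` extends to a linear character of `I`. Choosing such an
extension for one representative of every `N`-orbit and transporting it along the orbit by
conjugation gives the extension map. It is equivariant because two conjugators to the same
representative differ by an element of its inertia group, and conjugation by such an element
does not change a linear character of the inertia group.
-/

open CategoryTheory

noncomputable section

section LinearCharacter

variable {G : Type} [Group G]

def IsLinearChar (χ : G → ℂ) : Prop :=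
  ∃ μ : G →* ℂˣ, χ = fun g => (μ g : ℂ)

def linearRep (μ : G →* ℂˣ) : Representation ℂ G ℂ :=
  (Algebra.lmul ℂ ℂ).toMonoidHom.comp ((Units.coeHom ℂ).comp μ)

theorem character_linearRep (μ : G →* ℂˣ) (g : G) :
    (FDRep.of (linearRep μ)).character g = μ g :=
  Algebra.trace_self_apply (R := ℂ) _

theorem IsLinearChar.isIrrChar [Finite G] {χ : G → ℂ} (hχ : IsLinearChar χ) : IsIrrChar χ := by
  obtain ⟨μ, rfl⟩ := hχ
  have := Fintype.ofFinite G
  refine ⟨FDRep.of (linearRep μ), ?_, funext (character_linearRep μ)⟩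
  rw [FDRep.simple_iff_char_is_norm_one]
  simp [character_linearRep]

theorem FDRep.exists_ρ_eq_smul_id [IsMulCommutative G] (V : FDRep ℂ G) [Simple V] (g : G) :
    ∃ c : ℂ, V.ρ g = c • LinearMap.id := by
  let f : V ⟶ V := ⟨FGModuleCat.ofHom (V.ρ g), fun h => by
    ext x
    change V.ρ g (V.ρ h x) = V.ρ h (V.ρ g x)
    rw [← Module.End.mul_apply, ← map_mul, mul_comm', map_mul, Module.End.mul_apply]⟩
  obtain ⟨c, hc⟩ := endomorphism_simple_eq_smul_id ℂ f
  exact ⟨c, congrArg (fun f => f.hom.hom.hom) hc.symm⟩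

/- By Schur's lemma every `ρ g` is a scalar `c g`, so `χ = d • c` with `d = dim V`, and the
norm-one criterion `∑ χ g * χ g⁻¹ = |G|` for simple representations reads `|G| * d ^ 2 = |G|`. -/
theorem IsIrrChar.isLinearChar [Finite G] [IsMulCommutative G] {χ : G → ℂ} (hχ : IsIrrChar χ) :
    IsLinearChar χ := by
  obtain ⟨V, hV, rfl⟩ := hχ
  have := Fintype.ofFinite G
  choose c hc using V.exists_ρ_eq_smul_id
  have hid : (LinearMap.id : Module.End ℂ V) ≠ 0 := fun h =>
    id_nonzero V (by ext x; exact LinearMap.congr_fun h x)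
  have hsmul_inj := smul_left_injective ℂ hid
  have c_mul : ∀ g h, c (g * h) = c g * c h := fun g h => hsmul_inj <| by
    change c (g * h) • LinearMap.id = (c g * c h) • LinearMap.id
    rw [← hc, map_mul, hc, hc, smul_mul_smul, ← Module.End.one_eq_id, mul_one]
  have c_one : c 1 = 1 := hsmul_inj <| by simp only [← hc, map_one, one_smul]; rfl
  set d := Module.finrank ℂ V
  have hchar : ∀ g, V.character g = c g * d := fun g => by
    simp [FDRep.character, hc, d]
  have hd : d = 1 := by
    have hnorm := (FDRep.simple_iff_char_is_norm_one V).mp hV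
    have hterm : ∀ g, V.character g * V.character g⁻¹ = d ^ 2 := fun g => by
      rw [hchar, hchar, mul_mul_mul_comm, ← c_mul, mul_inv_cancel, c_one, one_mul, sq]
    simp only [hterm, Finset.sum_const, Finset.card_univ, nsmul_eq_mul,
      Nat.card_eq_fintype_card] at hnorm
    have hcard : (Fintype.card G : ℂ) ≠ 0 := by exact_mod_cast Fintype.card_ne_zero
    have : d ^ 2 = 1 := by exact_mod_cast (mul_eq_left₀ hcard).mp hnorm
    simpa using this
  refine ⟨(⟨⟨c, c_one⟩, c_mul⟩ : G →* ℂ).toHomUnits, funext fun g => ?_⟩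
  simp [hchar, hd]

end LinearCharacter

open scoped IsMulCommutative in
theorem MonoidHom.exists_extension_of_isMulCommutative_quotient {G : Type*} [Group G] [Finite G]
    {A K : Subgroup G} [K.Normal] [IsMulCommutative (G ⧸ K)] (μ : A →* ℂˣ)
    (hK : ∀ a : A, (a : G) ∈ K → μ a = 1) : ∃ e : G →* ℂˣ, ∀ a : A, e a = μ a := by
  let φ : A →* G ⧸ K := (QuotientGroup.mk' K).comp A.subtype
  have hφμ : φ.rangeRestrict.ker ≤ μ.ker := fun a ha =>
    hK a ((QuotientGroup.eq_one_iff _).mp (congrArg Subtype.val ha))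
  let ν : φ.range →* ℂˣ := φ.rangeRestrict.liftOfRightInverse _
    (Function.rightInverse_surjInv φ.rangeRestrict_surjective) ⟨μ, hφμ⟩
  have : NeZero (Monoid.exponent (G ⧸ K) : ℂ) :=
    ⟨by exact_mod_cast Monoid.exponent_ne_zero_of_finite⟩
  obtain ⟨e, he⟩ := MonoidHom.domRestrict_surjective ℂ φ.range ν
  exact ⟨e.comp (QuotientGroup.mk' K), fun a =>
    (DFunLike.congr_fun he (φ.rangeRestrict a)).trans (liftOfRightInverse_comp_apply _ _ _ _ a)⟩

theorem MonoidHom.exists_extension_of_isCyclic_quotient {G : Type*} [Group G] [Finite G]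
    (A : Subgroup G) [A.Normal] [IsCyclic (G ⧸ A)] (μ : A →* ℂˣ)
    (hμ : ∀ (g : G) (a : A), μ (MulAut.conjNormal g a) = μ a) :
    ∃ e : G →* ℂˣ, ∀ a : A, e a = μ a := by
  set K := μ.ker.map A.subtype
  have : K.Normal := ⟨by
    rintro _ ⟨a, ha, rfl⟩ g
    exact ⟨MulAut.conjNormal g a, by simpa [hμ] using ha, MulAut.conjNormal_apply g a⟩⟩
  let f : G ⧸ K →* G ⧸ A := QuotientGroup.lift K (QuotientGroup.mk' A)
    (by simpa using Subgroup.map_subtype_le μ.ker)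
  have hcenter : f.ker ≤ Subgroup.center (G ⧸ K) := by
    rw [QuotientGroup.ker_lift, QuotientGroup.ker_mk']
    rintro _ ⟨x, hx, rfl⟩
    refine Subgroup.mem_center_iff.mpr (QuotientGroup.induction_on · fun g => ?_)
    rw [QuotientGroup.mk'_apply, ← QuotientGroup.mk_mul, ← QuotientGroup.mk_mul, QuotientGroup.eq]
    -- the commutator `x⁻¹ (g⁻¹ x g)` lies in `ker μ` by invariance
    refine ⟨⟨x, hx⟩⁻¹ * MulAut.conjNormal g⁻¹ ⟨x, hx⟩, ?_, ?_⟩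
    · rw [SetLike.mem_coe, MonoidHom.mem_ker, map_mul, map_inv, hμ, inv_mul_cancel]
    · simp [mul_assoc]
  have := f.isMulCommutative_of_isCyclic_of_ker_le_center hcenter
  refine μ.exists_extension_of_isMulCommutative_quotient (K := K) fun a ha => ?_
  obtain ⟨b, hb, hba⟩ := ha
  rwa [← Subtype.ext hba]

section Inertia

variable {N : Type*} [Group N] {M : Type*} (L : Subgroup N) [hL : L.Normal]

theorem conjChar_conjChar (m n : N) (ψ : L → M) :
    conjChar L hL m (conjChar L hL n ψ) = conjChar L hL (n * m) ψ :=
  funext fun x => congrArg ψ (Subtype.ext (by group))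

theorem conjChar_one (ψ : L → M) : conjChar L hL 1 ψ = ψ :=
  funext fun x => congrArg ψ (Subtype.ext (by group))

theorem conjChar_injective (n : N) : Function.Injective (conjChar (M := M) L hL n) :=
  Function.LeftInverse.injective (g := conjChar L hL n⁻¹) fun ψ => by
    rw [conjChar_conjChar, mul_inv_cancel, conjChar_one]

theorem eq_conjChar_inv_of_eq_conjChar {χ ψ : L → M} {n : N} (h : χ = conjChar L hL n ψ) :
    ψ = conjChar L hL n⁻¹ χ := by
  rw [h, conjChar_conjChar, mul_inv_cancel, conjChar_one]

variable {L}

theorem mem_inertia_iff_s1 {ψ : L → M} {d : M} {x : N} :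
    x ∈ inertia L hL ψ d ↔ conjChar L hL x ψ = ψ := by
  change (∀ t ∈ L, extFun L ψ d (x * t * x⁻¹) = extFun L ψ d t) ↔ _
  refine ⟨fun h => funext fun t => ?_, fun h t ht => ?_⟩
  · simpa [extFun, conjChar, hL.conj_mem _ t.2 x] using h t t.2
  · simpa [extFun, conjChar, hL.conj_mem t ht x, ht] using congrFun h ⟨t, ht⟩

theorem mem_inertia_conjChar_iff {ψ : L → M} {d : M} {n x : N} :
    x ∈ inertia L hL (conjChar L hL n ψ) d ↔ n * x * n⁻¹ ∈ inertia L hL ψ d := by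
  rw [mem_inertia_iff_s1, mem_inertia_iff_s1, conjChar_conjChar, ← (conjChar_injective L n⁻¹).eq_iff,
    conjChar_conjChar, conjChar_conjChar, mul_inv_cancel, conjChar_one]

end Inertia
section LinearCharacterInertia

variable {N : Type} [Group N] {L : Subgroup N} [hL : L.Normal]

theorem IsLinearChar.conjChar {ψ : L → ℂ} (hψ : IsLinearChar ψ) (n : N) :
    IsLinearChar (conjChar L hL n ψ) := by
  obtain ⟨μ, rfl⟩ := hψ
  exact ⟨μ.comp (MulAut.conjNormal n).toMonoidHom, funext fun x => congrArg (fun y => (μ y : ℂ))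
    (Subtype.ext (MulAut.conjNormal_apply n x).symm)⟩

theorem IsLinearChar.le_inertia {ψ : L → ℂ} (hψ : IsLinearChar ψ) : L ≤ inertia L hL ψ 0 := by
  obtain ⟨μ, rfl⟩ := hψ
  intro t ht
  refine mem_inertia_iff_s1.mpr (funext fun s => ?_)
  change (μ (⟨t, ht⟩ * s * ⟨t, ht⟩⁻¹) : ℂ) = μ s
  rw [map_mul, map_mul, map_inv, mul_inv_cancel_comm]

theorem isCyclic_quotient_subgroupOf [IsCyclic (N ⧸ L)] (I : Subgroup N) :
    IsCyclic (I ⧸ L.subgroupOf I) := by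
  refine isCyclic_of_injective (QuotientGroup.map _ L I.subtype fun _ => id)
    ((injective_iff_map_eq_one _).mpr fun q => ?_)
  induction q using QuotientGroup.induction_on with
  | H x =>
    exact fun h => (QuotientGroup.eq_one_iff _).mpr ((QuotientGroup.eq_one_iff (x : N)).mp h)

theorem IsLinearChar.exists_extension_to_inertia [Finite N] [IsCyclic (N ⧸ L)] {ψ : L → ℂ}
    (hψ : IsLinearChar ψ) :
    ∃ e : inertia L hL ψ 0 →* ℂˣ,
      ∀ (x : N) (hx : x ∈ L) (hx' : x ∈ inertia L hL ψ 0), (e ⟨x, hx'⟩ : ℂ) = ψ ⟨x, hx⟩ := by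
  have hLI := hψ.le_inertia
  obtain ⟨μ, rfl⟩ := hψ
  have := isCyclic_quotient_subgroupOf (L := L) (inertia L hL (fun x => (μ x : ℂ)) 0)
  let μI := μ.comp (Subgroup.subgroupOfEquivOfLe hLI).toMonoidHom
  obtain ⟨e, he⟩ := μI.exists_extension_of_isCyclic_quotient (L.subgroupOf _) fun g a =>
    Units.ext (congrFun (mem_inertia_iff_s1.mp g.2) ⟨a, a.2⟩)
  exact ⟨e, fun x hx hx' => congrArg Units.val (he ⟨⟨x, hx'⟩, hx⟩)⟩

end LinearCharacterInertia

section Transport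

variable {N : Type} [Group N] (L : Subgroup N) [hL : L.Normal]

def conjSetoid (M : Type*) : Setoid (L → M) where
  r χ ψ := ∃ n, ψ = conjChar L hL n χ
  iseqv := {
    refl χ := ⟨1, (conjChar_one L χ).symm⟩
    symm := by
      rintro χ ψ ⟨n, h⟩
      exact ⟨n⁻¹, eq_conjChar_inv_of_eq_conjChar L h⟩
    trans := by
      rintro χ _ _ ⟨n, rfl⟩ ⟨m, rfl⟩
      exact ⟨n * m, conjChar_conjChar L m n χ⟩ }

def orbitRep {M : Type*} (χ : L → M) : L → M :=
  (Quotient.mk (conjSetoid L M) χ).out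

theorem orbitRep_conjChar {M : Type*} (n : N) (χ : L → M) :
    orbitRep L (conjChar L hL n χ) = orbitRep L χ :=
  congrArg Quotient.out (Quotient.sound (s := conjSetoid L M) ⟨n, rfl⟩).symm

theorem exists_eq_conjChar_orbitRep {M : Type*} (χ : L → M) :
    ∃ n, χ = conjChar L hL n (orbitRep L χ) :=
  Quotient.mk_out (s := conjSetoid L M) χ

def orbitTransporter {M : Type*} (χ : L → M) : N :=
  (exists_eq_conjChar_orbitRep L χ).choose

theorem eq_conjChar_orbitTransporter {M : Type*} (χ : L → M) :
    χ = conjChar L hL (orbitTransporter L χ) (orbitRep L χ) :=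
  (exists_eq_conjChar_orbitRep L χ).choose_spec

def inertiaConj {M : Type*} {χ ψ : L → M} {d : M} {n : N} (h : χ = conjChar L hL n ψ) :
    inertia L hL χ d →* inertia L hL ψ d where
  toFun x := ⟨n * x * n⁻¹, mem_inertia_conjChar_iff.mp (h ▸ x.2)⟩
  map_one' := Subtype.ext (by simp)
  map_mul' x y := Subtype.ext (by simp [mul_assoc])

def transportHom (E : ∀ ψ : L → ℂ, inertia L hL ψ 0 →* ℂˣ) (χ : L → ℂ) :
    inertia L hL χ 0 →* ℂˣ :=
  (E (orbitRep L χ)).comp (inertiaConj L (eq_conjChar_orbitTransporter L χ))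

theorem orbitTransporter_conjChar_mul_inv_mem {M : Type*} {d : M} (χ : L → M) (n : N) :
    orbitTransporter L (conjChar L hL n χ) * (orbitTransporter L χ * n)⁻¹ ∈
      inertia L hL (orbitRep L χ) d := by
  have h₁ := eq_conjChar_orbitTransporter L (conjChar L hL n χ)
  rw [orbitRep_conjChar] at h₁
  have h₂ : conjChar L hL (orbitTransporter L χ * n) (orbitRep L χ) = conjChar L hL n χ := by
    rw [← conjChar_conjChar, ← eq_conjChar_orbitTransporter]
  rw [mem_inertia_iff_s1, ← conjChar_conjChar, ← h₁, ← h₂, conjChar_conjChar, mul_inv_cancel,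
    conjChar_one]

theorem transportHom_conjChar (E : ∀ ψ : L → ℂ, inertia L hL ψ 0 →* ℂˣ) (χ : L → ℂ) (n x : N)
    (hx : x ∈ inertia L hL (conjChar L hL n χ) 0) (hx' : n * x * n⁻¹ ∈ inertia L hL χ 0) :
    transportHom L E (conjChar L hL n χ) ⟨x, hx⟩ = transportHom L E χ ⟨n * x * n⁻¹, hx'⟩ := by
  have hcongr : ∀ {ψ₁ ψ₂ : L → ℂ} (h : ψ₁ = ψ₂) (y : N) (h₁ : y ∈ inertia L hL ψ₁ 0)
      (h₂ : y ∈ inertia L hL ψ₂ 0), E ψ₁ ⟨y, h₁⟩ = E ψ₂ ⟨y, h₂⟩ := by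
    rintro _ _ rfl _ _ _; rfl
  let k : inertia L hL (orbitRep L χ) 0 := ⟨_, orbitTransporter_conjChar_mul_inv_mem L χ n⟩
  let t' := orbitTransporter L (conjChar L hL n χ)
  have hmem : t' * x * t'⁻¹ ∈ inertia L hL (orbitRep L χ) 0 := by
    rw [← orbitRep_conjChar L n χ]
    exact (inertiaConj L (eq_conjChar_orbitTransporter L _) ⟨x, hx⟩).2
  calc transportHom L E (conjChar L hL n χ) ⟨x, hx⟩
      = E (orbitRep L χ) ⟨t' * x * t'⁻¹, hmem⟩ := hcongr (orbitRep_conjChar L n χ) _ _ _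
    _ = E (orbitRep L χ)
          (k * inertiaConj L (eq_conjChar_orbitTransporter L χ) ⟨n * x * n⁻¹, hx'⟩ * k⁻¹) :=
        congrArg _ (Subtype.ext (by simp [k, t', inertiaConj]; group))
    _ = transportHom L E χ ⟨n * x * n⁻¹, hx'⟩ := by
        rw [map_mul, map_mul, map_inv, mul_inv_cancel_comm]; rfl

theorem transportHom_apply_of_mem (E : ∀ ψ : L → ℂ, inertia L hL ψ 0 →* ℂˣ)
    (hE : ∀ ψ, IsLinearChar ψ →
      ∀ (x : N) (hx : x ∈ L) (hx' : x ∈ inertia L hL ψ 0), (E ψ ⟨x, hx'⟩ : ℂ) = ψ ⟨x, hx⟩)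
    {χ : L → ℂ} (hχ : IsLinearChar χ) (x : N) (hx : x ∈ L) (hx' : x ∈ inertia L hL χ 0) :
    (transportHom L E χ ⟨x, hx'⟩ : ℂ) = χ ⟨x, hx⟩ := by
  have hrep := eq_conjChar_orbitTransporter L χ
  have hψ : IsLinearChar (orbitRep L χ) :=
    (eq_conjChar_inv_of_eq_conjChar L hrep) ▸ hχ.conjChar _
  exact (hE _ hψ _ (hL.conj_mem x hx _) _).trans (congrFun hrep ⟨x, hx⟩).symm

end Transport

/-- If `L ◁ N` is a normal abelian subgroup of a finite group `N` with `N/L`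
cyclic, then there is an `N`-equivariant extension map for `L ◁ N`: each irreducible
character `λ` of `L` is assigned an extension `Λ λ ∈ Irr(I_N(λ))`, and
`Λ (λ^n) = (Λ λ)^n` for all `n ∈ N`. -/
theorem stmt1 {N : Type} [Group N] [Finite N] (L : Subgroup N) [hL : L.Normal]
    (hab : ∀ x y : ↥L, x * y = y * x) (hcyc : IsCyclic (N ⧸ L)) :
    ∃ Λ : (χ : ↥L → ℂ) → (↥(inertia L hL χ 0) → ℂ),
      ∀ χ : ↥L → ℂ, IsIrrChar χ →
        (IsIrrChar (Λ χ) ∧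
          (∀ (x : N) (hx : x ∈ L) (hx' : x ∈ inertia L hL χ 0),
            Λ χ ⟨x, hx'⟩ = χ ⟨x, hx⟩) ∧
          (∀ (n : N) (x : N) (hx : x ∈ inertia L hL (conjChar L hL n χ) 0)
              (hx' : n * x * n⁻¹ ∈ inertia L hL χ 0),
            Λ (conjChar L hL n χ) ⟨x, hx⟩ = Λ χ ⟨n * x * n⁻¹, hx'⟩)) := by
  have : IsMulCommutative L := IsMulCommutative.of_comm hab
  have hE : ∀ ψ : L → ℂ, ∃ e : inertia L hL ψ 0 →* ℂˣ, IsLinearChar ψ →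
      ∀ (x : N) (hx : x ∈ L) (hx' : x ∈ inertia L hL ψ 0), (e ⟨x, hx'⟩ : ℂ) = ψ ⟨x, hx⟩ := by
    intro ψ
    by_cases hψ : IsLinearChar ψ
    · exact hψ.exists_extension_to_inertia.imp fun _ he _ => he
    · exact ⟨1, fun h => absurd h hψ⟩
  choose E hE using hE
  refine ⟨fun χ x => transportHom L E χ x, fun χ hχ => ⟨?_, ?_, ?_⟩⟩
  · exact IsLinearChar.isIrrChar ⟨transportHom L E χ, rfl⟩
  · exact transportHom_apply_of_mem L E hE hχ.isLinearChar
  · intro n x hx hx'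
    exact congrArg Units.val (transportHom_conjChar L E χ n x hx hx')
end
end

section
/- Let K be a finite group generated by subgroups K_1, …, K_j with [K_r, K_{r'}] = 1 for all r ≠ r', and let T_r ◁ K_r be normal abelian subgroups such that T := ⟨T_1, …, T_j⟩ is abelian and normal in K. Let λ ∈ Irr(T) be a linear character and λ_r its restriction to T_r. Then the inertia group of λ in K equals the product of inertia groups: I_K(λ) = I_{K_1}(λ_1) · I_{K_2}(λ_2) ⋯ I_{K_j}(λ_j). -/
open CategoryTheory

noncomputable section

/-!
Since the `K_r` commute pairwise and generate `K`, every `k ∈ K` is a product `k_1 ⋯ k_j` with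
`k_r ∈ K_r`. For `t ∈ T_r ≤ K_r` all factors but `k_r` centralize `t`, so `k` conjugates `T_r`
exactly as `k_r` does. As `λ` is a homomorphism and the `T_r` generate `T`, `k` fixes `λ` iff it
fixes every `λ_r`, i.e. iff every `k_r` fixes `λ_r`.
-/

section InertiaOfGenerated

theorem extFun_of_mem {N : Type*} [Group N] {M : Type*} {T : Subgroup N} (χ : ↥T → M) (d : M)
    {x : N} (hx : x ∈ T) : extFun T χ d x = χ ⟨x, hx⟩ :=
  dif_pos hx

variable {N : Type*} [Group N] {M : Type*} [Monoid M] {T : Subgroup N} (hT : T.Normal)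

theorem mem_inertia_iff_comp_conjNormal (lam : ↥T →* M) (d : M) (k : N) :
    k ∈ inertia T hT lam d ↔
      lam.comp (@MulAut.conjNormal _ _ T hT k).toMonoidHom = lam := by
  refine ⟨fun hk => MonoidHom.ext fun t => ?_, fun h t ht => ?_⟩
  · have := hk t t.2
    rwa [extFun_of_mem _ _ (hT.conj_mem t t.2 k), extFun_of_mem _ _ t.2] at this
  · rw [extFun_of_mem _ _ (hT.conj_mem t ht k), extFun_of_mem _ _ ht]
    exact DFunLike.congr_fun h ⟨t, ht⟩

theorem mem_inertia_iff_forall_of_eq_iSup {ι : Type*} {Ts : ι → Subgroup N}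
    (hTdef : T = ⨆ r, Ts r) (lam : ↥T →* M) (d : M) (k : N) :
    k ∈ inertia T hT lam d ↔
      ∀ r, ∀ t ∈ Ts r, extFun T lam d (k * t * k⁻¹) = extFun T lam d t := by
  refine ⟨fun hk r t ht => hk t (hTdef ▸ le_iSup Ts r ht), fun h => ?_⟩
  rw [mem_inertia_iff_comp_conjNormal]
  let fixedLocus := (lam.comp (@MulAut.conjNormal _ _ T hT k).toMonoidHom).eqLocus lam
  have hT_le : T ≤ fixedLocus.map T.subtype := by
    refine hTdef.trans_le (iSup_le fun r t ht => ?_)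
    have htT : t ∈ T := hTdef ▸ le_iSup Ts r ht
    refine ⟨⟨t, htT⟩, ?_, rfl⟩
    have := h r t ht
    rwa [extFun_of_mem _ _ (hT.conj_mem t htT k), extFun_of_mem _ _ htT] at this
  ext t
  obtain ⟨t', ht', htt'⟩ := hT_le t.2
  rw [← Subtype.ext htt']
  exact ht'

end InertiaOfGenerated

open Function in
theorem List.prod_ofFn_eq_noncommProd {M : Type*} [Monoid M] {j : ℕ} (f : Fin j → M)
    (comm : ((Finset.univ : Finset (Fin j)) : Set (Fin j)).Pairwise (Commute on f)) :
    (List.ofFn f).prod = Finset.univ.noncommProd f comm := by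
  rw [List.ofFn_eq_map,
    ← Finset.noncommProd_toFinset _ _ (by simpa using comm) (List.nodup_finRange j)]
  simp

section CommutingSubgroups

variable {G : Type*} [Group G] {j : ℕ} {Ks : Fin j → Subgroup G}
  (hcomm : Pairwise fun r r' => ∀ x y : G, x ∈ Ks r → y ∈ Ks r' → Commute x y)
include hcomm

theorem exists_prod_ofFn_eq_of_iSup_eq_top (htop : ⨆ r, Ks r = ⊤) (k : G) :
    ∃ f : Fin j → G, (∀ r, f r ∈ Ks r) ∧ k = (List.ofFn f).prod := by
  obtain ⟨g, hg⟩ : k ∈ (Subgroup.noncommPiCoprod hcomm).range := by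
    rw [Subgroup.noncommPiCoprod_range, htop]
    trivial
  refine ⟨fun r => g r, fun r => (g r).2, ?_⟩
  rw [← hg, List.prod_ofFn_eq_noncommProd _ fun r _ r' _ hne => hcomm hne _ _ (g r).2 (g r').2]
  rfl

open Function in
theorem conj_prod_ofFn_eq {f : Fin j → G} (hf : ∀ r, f r ∈ Ks r) (r : Fin j) {t : G}
    (ht : t ∈ Ks r) : (List.ofFn f).prod * t * (List.ofFn f).prod⁻¹ = f r * t * (f r)⁻¹ := by
  classical
  have hf_comm : ((Finset.univ : Finset (Fin j)) : Set (Fin j)).Pairwise (Commute on f) :=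
    fun r _ r' _ hne => hcomm hne _ _ (hf r) (hf r')
  rw [List.prod_ofFn_eq_noncommProd f hf_comm,
    ← Finset.univ.mul_noncommProd_erase (Finset.mem_univ r) f hf_comm]
  have hc : Commute t ((Finset.univ.erase r).noncommProd f
      (hf_comm.mono (Finset.coe_subset.2 (Finset.erase_subset r _)))) :=
    Finset.noncommProd_commute _ _ _ _ fun r' hr' =>
      hcomm (Finset.ne_of_mem_erase hr').symm _ _ ht (hf r')
  rw [mul_inv_rev, mul_assoc (f r), ← hc.eq]
  group

end CommutingSubgroups

theorem stmt4_general {K : Type*} [Group K] (j : ℕ) (Ks Ts : Fin j → Subgroup K)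
    (T : Subgroup K) (hT : T.Normal)
    (hTdef : T = ⨆ r, Ts r)
    (hKgen : (⨆ r, Ks r) = ⊤)
    (hcomm : ∀ r r' : Fin j, r ≠ r' → ∀ x ∈ Ks r, ∀ y ∈ Ks r', Commute x y)
    (hTK : ∀ r, Ts r ≤ Ks r)
    (lam : ↥T →* ℂˣ) :
    ∀ k : K,
      k ∈ inertia T hT (⇑lam) 1 ↔
        ∃ f : Fin j → K,
          (∀ r, f r ∈ Ks r ∧ ∀ t ∈ Ts r,
            extFun T (⇑lam) 1 (f r * t * (f r)⁻¹) = extFun T (⇑lam) 1 t) ∧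
          k = (List.ofFn f).prod := by
  have hcomm' : Pairwise fun r r' => ∀ x y : K, x ∈ Ks r → y ∈ Ks r' → Commute x y :=
    fun r r' hne x y hx hy => hcomm r r' hne x hx y hy
  intro k
  rw [mem_inertia_iff_forall_of_eq_iSup hT hTdef]
  constructor
  · intro hk
    obtain ⟨f, hf, rfl⟩ := exists_prod_ofFn_eq_of_iSup_eq_top hcomm' hKgen k
    refine ⟨f, fun r => ⟨hf r, fun t ht => ?_⟩, rfl⟩
    rw [← conj_prod_ofFn_eq hcomm' hf r (hTK r ht)]
    exact hk r t ht
  · rintro ⟨f, hf, rfl⟩ r t ht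
    rw [conj_prod_ofFn_eq hcomm' (fun r => (hf r).1) r (hTK r ht)]
    exact (hf r).2 t ht

/-- Let `K` be generated by pairwise commuting subgroups `K_r`, with normal
abelian subgroups `T_r ◁ K_r`, such that `T = ⟨T_0, …, T_{j-1}⟩` is abelian and normal
in `K`. For a linear character `λ` of `T` with restrictions `λ_r` to `T_r`, the inertia
group satisfies `I_K(λ) = I_{K_0}(λ_0) ⋯ I_{K_{j-1}}(λ_{j-1})` (as a product of sets):
`k` fixes `λ` iff `k = k_0 ⋯ k_{j-1}` with each `k_r ∈ K_r` fixing `λ_r`. -/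
theorem stmt4 {K : Type*} [Group K] [Finite K] (j : ℕ) (Ks Ts : Fin j → Subgroup K)
    (T : Subgroup K) (hT : T.Normal) (hTab : ∀ x y : ↥T, x * y = y * x)
    (hTdef : T = ⨆ r, Ts r)
    (hKgen : (⨆ r, Ks r) = ⊤)
    (hcomm : ∀ r r' : Fin j, r ≠ r' → ∀ x ∈ Ks r, ∀ y ∈ Ks r', Commute x y)
    (hTK : ∀ r, Ts r ≤ Ks r)
    (hTrnorm : ∀ r, ∀ k ∈ Ks r, ∀ t ∈ Ts r, k * t * k⁻¹ ∈ Ts r)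
    (lam : ↥T →* ℂˣ) :
    ∀ k : K,
      k ∈ inertia T hT (⇑lam) 1 ↔
        ∃ f : Fin j → K,
          (∀ r, f r ∈ Ks r ∧ ∀ t ∈ Ts r,
            extFun T (⇑lam) 1 (f r * t * (f r)⁻¹) = extFun T (⇑lam) 1 t) ∧
          k = (List.ofFn f).prod :=
  stmt4_general j Ks Ts T hT hTdef hKgen hcomm hTK lam
end
end

section
/- Let N be a finite group, T a normal abelian subgroup, δ a linear character of N, and set T₀ = T ∩ ker(δ). Let μ be a linear character of T₀ and λ a linear character of T extending μ. Suppose that for every n ∈ I_N(μ) there exists an integer i with λ^n = λ · (δ|_T)^i. Then I_N(λ) is a normal subgroup of I_N(μ), and the quotient I_N(μ)/I_N(λ) is cyclic. -/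
open CategoryTheory

noncomputable section

/-!
For `n ∈ I_N(μ)` the character `λ^n λ⁻¹` lies in the cyclic group `Z = ⟨δ|_T⟩`, whose elements
are fixed under conjugation because `δ` is a class function. On the stabiliser of the coset
`λ Z` the map `n ↦ λ^n λ⁻¹` is then a homomorphism into `Z` (the cocycle identity
`λ^(ab) λ⁻¹ = (λ^a λ⁻¹)^b · λ^b λ⁻¹` loses its twist), with kernel `I_N(λ)`. Its kernel is normal
and its image, a subgroup of `Z`, is cyclic.
-/

theorem MonoidHom.exists_forall_eq_zpow_mul_mem_ker {G H : Type*} [Group G] [Group H]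
    (f : G →* H) [IsCyclic f.range] :
    ∃ g : G, ∀ x, ∃ (k : ℤ) (m : G), m ∈ f.ker ∧ x = g ^ k * m := by
  obtain ⟨⟨_, g, rfl⟩, hg⟩ := IsCyclic.exists_generator (α := f.range)
  refine ⟨g, fun x => ?_⟩
  obtain ⟨k, hk⟩ := Subgroup.mem_zpowers_iff.mp (hg ⟨f x, x, rfl⟩)
  refine ⟨k, (g ^ k)⁻¹ * x, ?_, (mul_inv_cancel_left _ _).symm⟩
  have hfx : f g ^ k = f x := congrArg Subtype.val hk
  rw [MonoidHom.mem_ker, map_mul, map_inv, map_zpow, hfx, inv_mul_cancel]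

namespace Subgroup.Normal

variable {N M : Type*} [Group N] {T : Subgroup N} (hT : T.Normal)

def conjHom (n : N) : T →* T :=
  ((MulAut.conj n).toMonoidHom.comp T.subtype).codRestrict T fun t => hT.conj_mem t t.2 n

variable [CommGroup M]

def conjCharHom (n : N) : (T →* M) →* (T →* M) :=
  MonoidHom.compHom' (hT.conjHom n)

@[simp]
theorem conjCharHom_apply (n : N) (χ : T →* M) (t : T) :
    hT.conjCharHom n χ t = χ ⟨n * t * n⁻¹, hT.conj_mem t t.2 n⟩ := rfl

theorem conjCharHom_one (χ : T →* M) : hT.conjCharHom 1 χ = χ := by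
  ext t
  simp

theorem conjCharHom_mul (a b : N) (χ : T →* M) :
    hT.conjCharHom (a * b) χ = hT.conjCharHom b (hT.conjCharHom a χ) := by
  ext t
  simp only [conjCharHom_apply, mul_inv_rev, ← mul_assoc]

theorem conjCharHom_comp_subtype (n : N) (δ : N →* M) :
    hT.conjCharHom n (δ.comp T.subtype) = δ.comp T.subtype := by
  ext t
  simp

theorem mem_inertia_iff_conjCharHom_eq {χ : T →* M} {d : M} {n : N} :
    n ∈ inertia T hT χ d ↔ hT.conjCharHom n χ = χ := by
  refine ⟨fun h => MonoidHom.ext fun t => ?_, fun h t ht => ?_⟩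
  · simpa [extFun, hT.conj_mem t t.2 n] using h t t.2
  · simpa [extFun, ht, hT.conj_mem t ht n] using DFunLike.congr_fun h ⟨t, ht⟩

def conjCharDiv (χ : T →* M) (n : N) : T →* M :=
  hT.conjCharHom n χ / χ

theorem conjCharDiv_mul (χ : T →* M) (a b : N) :
    hT.conjCharDiv χ (a * b) = hT.conjCharHom b (hT.conjCharDiv χ a) * hT.conjCharDiv χ b := by
  simp only [conjCharDiv, conjCharHom_mul, map_div, div_mul_div_cancel]

theorem conjCharDiv_one (χ : T →* M) : hT.conjCharDiv χ 1 = 1 := by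
  rw [conjCharDiv, conjCharHom_one, div_self']

theorem mem_inertia_iff_conjCharDiv_eq_one {χ : T →* M} {d : M} {n : N} :
    n ∈ inertia T hT χ d ↔ hT.conjCharDiv χ n = 1 := by
  rw [mem_inertia_iff_conjCharHom_eq, conjCharDiv, div_eq_one]

variable {Z : Subgroup (T →* M)}

/-- The stabiliser of the coset `χ Z` under `χ ↦ χ^n`. -/
def inertiaModulo (hZ : ∀ n, ∀ ζ ∈ Z, hT.conjCharHom n ζ = ζ) (χ : T →* M) : Subgroup N where
  carrier := {n | hT.conjCharDiv χ n ∈ Z}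
  one_mem' := by
    rw [Set.mem_ofPred_eq, conjCharDiv_one]
    exact one_mem Z
  mul_mem' {a b} ha hb := by
    rw [Set.mem_ofPred_eq, conjCharDiv_mul, hZ b _ ha]
    exact mul_mem ha hb
  inv_mem' {a} ha := by
    have h := hT.conjCharDiv_mul χ a a⁻¹
    rw [mul_inv_cancel, conjCharDiv_one, hZ _ _ ha, eq_comm, mul_eq_one_iff_eq_inv'] at h
    rw [Set.mem_ofPred_eq, h]
    exact inv_mem ha

variable (hZ : ∀ n, ∀ ζ ∈ Z, hT.conjCharHom n ζ = ζ) (χ : T →* M)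

def conjCharDivHom : hT.inertiaModulo hZ χ →* (T →* M) where
  toFun n := hT.conjCharDiv χ n
  map_one' := hT.conjCharDiv_one χ
  map_mul' a b := by
    rw [Subgroup.coe_mul, conjCharDiv_mul, hZ b _ a.2]

theorem inertia_le_inertiaModulo (d : M) : inertia T hT χ d ≤ hT.inertiaModulo hZ χ := by
  intro n hn
  show hT.conjCharDiv χ n ∈ Z
  rw [hT.mem_inertia_iff_conjCharDiv_eq_one.mp hn]
  exact one_mem Z

theorem conj_mem_inertia {d : M} {n m : N} (hn : n ∈ hT.inertiaModulo hZ χ)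
    (hm : m ∈ inertia T hT χ d) : n * m * n⁻¹ ∈ inertia T hT χ d := by
  let n' : hT.inertiaModulo hZ χ := ⟨n, hn⟩
  let m' : hT.inertiaModulo hZ χ := ⟨m, hT.inertia_le_inertiaModulo hZ χ d hm⟩
  have hm' : m' ∈ (hT.conjCharDivHom hZ χ).ker := hT.mem_inertia_iff_conjCharDiv_eq_one.mp hm
  exact hT.mem_inertia_iff_conjCharDiv_eq_one.mpr ((MonoidHom.normal_ker _).conj_mem m' hm' n')

theorem exists_zpow_mul_mem_inertia [IsCyclic Z] {H : Subgroup N} (hH : H ≤ hT.inertiaModulo hZ χ)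
    (d : M) : ∃ g ∈ H, ∀ n ∈ H, ∃ (k : ℤ) (m : N), m ∈ inertia T hT χ d ∧ n = g ^ k * m := by
  let f := (hT.conjCharDivHom hZ χ).comp (Subgroup.inclusion hH)
  have hf : f.range ≤ Z := by
    rintro _ ⟨n, rfl⟩
    exact hH n.2
  have := Subgroup.isCyclic_of_le hf
  obtain ⟨g, hg⟩ := f.exists_forall_eq_zpow_mul_mem_ker
  refine ⟨g, g.2, fun n hn => ?_⟩
  obtain ⟨k, m, hm, hnm⟩ := hg ⟨n, hn⟩
  exact ⟨k, m, hT.mem_inertia_iff_conjCharDiv_eq_one.mpr hm, congrArg Subtype.val hnm⟩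

end Subgroup.Normal

theorem stmt6_general {N : Type*} [Group N] (T : Subgroup N) (hT : T.Normal) (δ : N →* ℂˣ)
    (hT0 : (T ⊓ δ.ker).Normal)
    (μ : ↥(T ⊓ δ.ker) →* ℂˣ) (lam : ↥T →* ℂˣ)
    (hconj : ∀ n ∈ inertia (T ⊓ δ.ker) hT0 (⇑μ) 1, ∃ i : ℤ,
      ∀ (t : N) (ht : t ∈ T),
        lam ⟨n * t * n⁻¹, hT.conj_mem t ht n⟩ = lam ⟨t, ht⟩ * δ t ^ i) :
    (∀ n ∈ inertia (T ⊓ δ.ker) hT0 (⇑μ) 1, ∀ m ∈ inertia T hT (⇑lam) 1,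
        n * m * n⁻¹ ∈ inertia T hT (⇑lam) 1) ∧
      ∃ g ∈ inertia (T ⊓ δ.ker) hT0 (⇑μ) 1,
        ∀ n ∈ inertia (T ⊓ δ.ker) hT0 (⇑μ) 1,
          ∃ (k : ℤ) (m : N), m ∈ inertia T hT (⇑lam) 1 ∧ n = g ^ k * m := by
  have hZ : ∀ n, ∀ ζ ∈ Subgroup.zpowers (δ.comp T.subtype), hT.conjCharHom n ζ = ζ := by
    rintro n _ ⟨i, rfl⟩
    rw [map_zpow, hT.conjCharHom_comp_subtype]
  have hle : inertia (T ⊓ δ.ker) hT0 μ 1 ≤ hT.inertiaModulo hZ lam := fun n hn => by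
    obtain ⟨i, hi⟩ := hconj n hn
    refine Subgroup.mem_zpowers_iff.mpr ⟨i, MonoidHom.ext fun t => ?_⟩
    rw [MonoidHom.zpow_apply, Subgroup.Normal.conjCharDiv, MonoidHom.div_apply,
      eq_div_iff_mul_eq', hT.conjCharHom_apply, hi t t.2, mul_comm]
    rfl
  exact ⟨fun n hn m hm => hT.conj_mem_inertia hZ lam (hle hn) hm,
    hT.exists_zpow_mul_mem_inertia hZ lam hle 1⟩

/-- Let `N` be finite, `T ◁ N` abelian, `δ` a linear character of `N`,
`T₀ = T ∩ ker δ`, `μ` a linear character of `T₀` and `λ` a linear character of `T`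
extending `μ`. If for every `n ∈ I_N(μ)` there is `i : ℤ` with `λ^n = λ·(δ|_T)^i`, then
`I_N(λ) ◁ I_N(μ)` and the quotient `I_N(μ)/I_N(λ)` is cyclic. -/
theorem stmt6 {N : Type*} [Group N] [Finite N] (T : Subgroup N) (hT : T.Normal)
    (hTab : ∀ x y : ↥T, x * y = y * x) (δ : N →* ℂˣ)
    (hT0 : (T ⊓ δ.ker).Normal)
    (μ : ↥(T ⊓ δ.ker) →* ℂˣ) (lam : ↥T →* ℂˣ)
    (hext : ∀ (x : N) (hx : x ∈ T ⊓ δ.ker), lam ⟨x, hx.1⟩ = μ ⟨x, hx⟩)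
    (hconj : ∀ n ∈ inertia (T ⊓ δ.ker) hT0 (⇑μ) 1, ∃ i : ℤ,
      ∀ (t : N) (ht : t ∈ T),
        lam ⟨n * t * n⁻¹, hT.conj_mem t ht n⟩ = lam ⟨t, ht⟩ * δ t ^ i) :
    (∀ n ∈ inertia (T ⊓ δ.ker) hT0 (⇑μ) 1, ∀ m ∈ inertia T hT (⇑lam) 1,
        n * m * n⁻¹ ∈ inertia T hT (⇑lam) 1) ∧
      ∃ g ∈ inertia (T ⊓ δ.ker) hT0 (⇑μ) 1,
        ∀ n ∈ inertia (T ⊓ δ.ker) hT0 (⇑μ) 1,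
          ∃ (k : ℤ) (m : N), m ∈ inertia T hT (⇑lam) 1 ∧ n = g ^ k * m :=
  stmt6_general T hT δ hT0 μ lam hconj
end
end
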